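/- arXiv:2203.05888 — 3 statements merged into one kernel-verified Lean document; each statement's English description precedes it below -/
import Mathlib

section
/- Let G be a digraph, let ε > 0 and let R ∈ ℕ₊ be such that |N_G(x,3R)| ≤ (1+ε)^R for every x ∈ V(G). Let h : V(G) → ℕ be a bounded function and let y ∈ V(G) satisfy h(y) = max_{x∈V(G)} h(x). Then there exists r ∈ {3,4,…,3R} such that Σ_{x∈N_G(y,r)} h(x) ≤ (1+ε)·Σ_{x∈N_G(y,r−3)} h(x). -/
open MeasureTheory
open scoped Classical ENNReal

namespace MTLLL

variable {V : Type*} {ι : Type*}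

/-- The out-neighbourhood `Var(x)` of a vertex `x` in the digraph with edge relation `E`. -/
def Var (E : V → V → Prop) (x : V) : Set V := {y | E x y}

/-- The in-neighbourhood `Cl(x)`. -/
def Cl (E : V → V → Prop) (x : V) : Set V := {y | E y x}

/-- The neighbourhood `N(x) = Var(x) ∪ Cl(x)`. -/
def Nbr (E : V → V → Prop) (x : V) : Set V := Var E x ∪ Cl E x

/-- The maximal vertex degree of a digraph, as an extended natural number. -/
noncomputable def maxdeg (E : V → V → Prop) : ℕ∞ := ⨆ x : V, (Nbr E x).encard

/-- The digraph `Rel(G)`: edges join vertices whose out-neighbourhoods intersect. -/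
def Rel (E : V → V → Prop) (x y : V) : Prop := (Var E x ∩ Var E y).Nonempty

/-- A set is independent in a digraph if no edge other than a self-loop joins two of its
elements. -/
def Indep (E : V → V → Prop) (I : Set V) : Prop :=
  ∀ x ∈ I, ∀ y ∈ I, x ≠ y → ¬ E x y

/-- `I` is a maximal independent subset of `X`. -/
def MaxIndepIn (E : V → V → Prop) (X I : Set V) : Prop :=
  I ⊆ X ∧ Indep E I ∧ ∀ J : Set V, I ⊆ J → J ⊆ X → Indep E J → J = I

/-- A local rule: for each vertex `x` a set of colourings of `Var(x)` by `b` colours,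
imposing no restriction when `Var(x)` is empty. -/
structure LocalRule (E : V → V → Prop) (b : ℕ) where
  R : ∀ x : V, Set (Var E x → Fin b)
  isFull_of_empty : ∀ x : V, Var E x = ∅ → R x = Set.univ

/-- The complement rule `𝐑ᶜ(x)`. -/
def LocalRule.Rc {E : V → V → Prop} {b : ℕ} (R : LocalRule E b) (x : V) :
    Set (Var E x → Fin b) := (R.R x)ᶜ

/-- A colouring satisfies the rule if at every vertex its restriction to `Var(x)` obeys
`𝐑(x)`. -/
def Satisfies (E : V → V → Prop) {b : ℕ} (R : LocalRule E b) (f : V → Fin b) : Prop :=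
  ∀ x : V, (fun y : Var E x => f y.1) ∈ R.R x

/-- The bad set `B(f)` of clauses violated by `f`. -/
def bad (E : V → V → Prop) {b : ℕ} (R : LocalRule E b) (f : V → Fin b) : Set V :=
  {x : V | (fun y : Var E x => f y.1) ∈ R.Rc x}

/-- The symmetrisation of the digraph, with loops removed, as a simple graph;
it is used to measure graph distances. -/
def toSG (E : V → V → Prop) : SimpleGraph V where
  Adj x y := x ≠ y ∧ (E x y ∨ E y x)
  symm := ⟨fun x y h => ⟨Ne.symm h.1, h.2.symm⟩⟩
  loopless := ⟨fun x h => h.1 rfl⟩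

/-- The ball of radius `r` around `x` in graph distance (ignoring orientations). -/
def ball (E : V → V → Prop) (x : V) (r : ℕ) : Set V :=
  {y | ∃ p : (toSG E).Walk x y, p.length ≤ r}

/-- The class `subexp(R,ε,d)`: max degree at most `d` and balls of radius `3R` of size at
most `(1+ε)^R`. -/
def Subexp (E : V → V → Prop) (Rad d : ℕ) (ε : ℝ) : Prop :=
  maxdeg E ≤ (d : ℕ∞) ∧
  ∀ x : V, (ball E x (3 * Rad)).Finite ∧ ((ball E x (3 * Rad)).ncard : ℝ) ≤ (1 + ε) ^ Rad

/-- A partition (encoded by the map sending a vertex to its part) is `r`-sparse if distinct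
vertices in the same part are at graph distance greater than `2r`. -/
def Sparse (E : V → V → Prop) (part : V → ι) (r : ℕ) : Prop :=
  ∀ x y : V, part x = part y → x ≠ y → y ∉ ball E x (2 * r)

/-- An independence function: `I X` is always a maximal independent subset of `X`. -/
def IndepFun (E : V → V → Prop) (I : Set V → Set V) : Prop :=
  ∀ X : Set V, MaxIndepIn E X (I X)

/-- `Var` of a set of vertices. -/
def VarSet (E : V → V → Prop) (A : Set V) : Set V := ⋃ x ∈ A, Var E x

/-- One run of the Moser–Tardos algorithm: `(mtAux j).1 = MT^j` and `(mtAux j).2 = h^{j+1}`. -/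
noncomputable def mtAux (E : V → V → Prop) {b : ℕ} (R : LocalRule E b)
    (part : V → ι) (I : Set V → Set V) (rnd : ι × ℕ → Fin b) :
    ℕ → (V → Fin b) × (V → ℕ)
  | 0 => (fun x => rnd (part x, 0), fun _ => 1)
  | j + 1 =>
    let p := mtAux E R part I rnd j
    (fun x => if x ∈ VarSet E (I (bad E R p.1)) then rnd (part x, p.2 x) else p.1 x,
     fun x => if x ∈ VarSet E (I (bad E R p.1)) then p.2 x + 1 else p.2 x)

/-- The colouring `MT^j` produced by the Moser–Tardos algorithm. -/
noncomputable def MT (E : V → V → Prop) {b : ℕ} (R : LocalRule E b)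
    (part : V → ι) (I : Set V → Set V) (rnd : ι × ℕ → Fin b) (j : ℕ) : V → Fin b :=
  (mtAux E R part I rnd j).1

/-- The resampling counters `h^k`. -/
noncomputable def hres (E : V → V → Prop) {b : ℕ} (R : LocalRule E b)
    (part : V → ι) (I : Set V → Set V) (rnd : ι × ℕ → Fin b) : ℕ → V → ℕ
  | 0 => fun _ => 0
  | j + 1 => (mtAux E R part I rnd j).2

/-- The total number `h^∞(x)` of resamplings at `x`. -/
noncomputable def hinf (E : V → V → Prop) {b : ℕ} (R : LocalRule E b)
    (part : V → ι) (I : Set V → Set V) (rnd : ι × ℕ → Fin b) (x : V) : ℕ∞ :=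
  ⨆ k : ℕ, (hres E R part I rnd k x : ℕ∞)

/-- `μ` is the product over `ι × ℕ` of uniform measures on `Fin b`: it is a probability
measure giving each cylinder set its natural measure. -/
def IsUnifProduct {ι : Type*} (b : ℕ) (μ : Measure ((ι × ℕ) → Fin b)) : Prop :=
  IsProbabilityMeasure μ ∧
  ∀ (s : Finset (ι × ℕ)) (g : (ι × ℕ) → Fin b),
    μ {rnd | ∀ p ∈ s, rnd p = g p} = (1 / (b : ℝ≥0∞)) ^ s.card

end MTLLL

/-! If the ball sums `S k = ∑ h` over `N(y, 3k)` grew by more than the factor `1 + ε` at each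
of the `R` steps `k → k + 1`, then `S R > (1 + ε)^R h(y)`. But `h` is maximal at `y`, so
`S R ≤ |N(y, 3R)| h(y) ≤ (1 + ε)^R h(y)`. -/

section GeometricGrowth

variable {R : Type*} [Semiring R]

theorem pow_mul_lt_of_forall_mul_lt [Preorder R] [PosMulMono R] {s : ℕ → R} {a : R}
    (ha : 0 ≤ a) {n : ℕ} (hn : n ≠ 0) (hs : ∀ k < n, a * s k < s (k + 1)) :
    a ^ n * s 0 < s n := by
  induction n with
  | zero => exact absurd rfl hn
  | succ m ih =>
    rcases Nat.eq_zero_or_pos m with rfl | hm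
    · simpa using hs 0 Nat.zero_lt_one
    calc a ^ (m + 1) * s 0 = a * (a ^ m * s 0) := by rw [pow_succ', mul_assoc]
      _ ≤ a * s m := mul_le_mul_of_nonneg_left (ih hm.ne' fun k hk => hs k (by omega)).le ha
      _ < s (m + 1) := hs m m.lt_succ_self

theorem exists_succ_le_mul_of_le_pow_mul [LinearOrder R] [PosMulMono R] {s : ℕ → R} {a : R}
    (ha : 0 ≤ a) {n : ℕ} (hn : n ≠ 0) (hs : s n ≤ a ^ n * s 0) :
    ∃ k < n, s (k + 1) ≤ a * s k := by
  by_contra! h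
  exact (pow_mul_lt_of_forall_mul_lt ha hn h).not_ge hs

end GeometricGrowth

theorem finsum_mem_le_ncard_mul {α : Type*} {s : Set α} (hs : s.Finite) {f : α → ℝ} {c : ℝ}
    (hf : ∀ x ∈ s, f x ≤ c) : ∑ᶠ x ∈ s, f x ≤ s.ncard * c := by
  rw [finsum_mem_eq_finite_toFinset_sum f hs, Set.ncard_eq_toFinset_card s hs, ← nsmul_eq_mul]
  exact Finset.sum_le_card_nsmul _ f c fun x hx => hf x (hs.mem_toFinset.mp hx)

theorem MTLLL.ball_zero {V : Type*} (E : V → V → Prop) (x : V) : MTLLL.ball E x 0 = {x} := by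
  ext z
  refine ⟨fun ⟨p, hp⟩ => (SimpleGraph.Walk.eq_of_length_eq_zero (Nat.le_zero.mp hp)).symm, ?_⟩
  rintro rfl
  exact ⟨SimpleGraph.Walk.nil, le_rfl⟩

open MTLLL in
theorem exists_radius_small_growth_general
    {V : Type*} (E : V → V → Prop) (ε : ℝ) (hε : 0 < ε)
    (Rad : ℕ) (hRad : 0 < Rad)
    (hball : ∀ x : V, (ball E x (3 * Rad)).Finite ∧
      ((ball E x (3 * Rad)).ncard : ℝ) ≤ (1 + ε) ^ Rad)
    (h : V → ℕ)
    (y : V) (hy : ∀ x : V, h x ≤ h y) :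
    ∃ r : ℕ, 3 ≤ r ∧ r ≤ 3 * Rad ∧
      (∑ᶠ x ∈ ball E y r, (h x : ℝ)) ≤ (1 + ε) * ∑ᶠ x ∈ ball E y (r - 3), (h x : ℝ) := by
  have htotal : ∑ᶠ x ∈ ball E y (3 * Rad), (h x : ℝ)
      ≤ (1 + ε) ^ Rad * ∑ᶠ x ∈ ball E y (3 * 0), (h x : ℝ) :=
    calc ∑ᶠ x ∈ ball E y (3 * Rad), (h x : ℝ)
        ≤ (ball E y (3 * Rad)).ncard * (h y : ℝ) :=
          finsum_mem_le_ncard_mul (hball y).1 fun x _ => by exact_mod_cast hy x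
      _ ≤ (1 + ε) ^ Rad * h y := by gcongr; exact (hball y).2
      _ = (1 + ε) ^ Rad * ∑ᶠ x ∈ ball E y (3 * 0), (h x : ℝ) := by
          rw [mul_zero, ball_zero, finsum_mem_singleton]
  obtain ⟨k, hk, hstep⟩ := exists_succ_le_mul_of_le_pow_mul
    (s := fun k => ∑ᶠ x ∈ ball E y (3 * k), (h x : ℝ)) (by linarith) hRad.ne' htotal
  refine ⟨3 * (k + 1), by omega, by omega, ?_⟩
  rwa [show 3 * (k + 1) - 3 = 3 * k by omega]

open MTLLL in
/-- Lemma 3.11: in a graph whose `3R`-balls have at most `(1+ε)^R` vertices, for a bounded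
function `h` maximised at `y` there is a radius `r ∈ {3,…,3R}` at which the ball sums of
`h` grow by a factor of at most `1+ε` from radius `r-3` to `r`. -/
theorem exists_radius_small_growth
    {V : Type*} [Nonempty V] (E : V → V → Prop) (ε : ℝ) (hε : 0 < ε)
    (Rad : ℕ) (hRad : 0 < Rad)
    (hball : ∀ x : V, (ball E x (3 * Rad)).Finite ∧
      ((ball E x (3 * Rad)).ncard : ℝ) ≤ (1 + ε) ^ Rad)
    (h : V → ℕ) (hbd : ∃ C : ℕ, ∀ x : V, h x ≤ C)
    (y : V) (hy : ∀ x : V, h x ≤ h y) :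
    ∃ r : ℕ, 3 ≤ r ∧ r ≤ 3 * Rad ∧
      (∑ᶠ x ∈ ball E y r, (h x : ℝ)) ≤ (1 + ε) * ∑ᶠ x ∈ ball E y (r - 3), (h x : ℝ) :=
  exists_radius_small_growth_general E ε hε Rad hRad hball h y hy
end

section
/- Let G be a Borel digraph with maxdeg(G) < ∞. Then for every r ∈ ℕ there exists a finite partition of V(G) into Borel sets which is r-sparse. -/
open MeasureTheory
open scoped Classical ENNReal

/-!
Call `x` and `y` close if `y` lies in the `2r`-ball around `x`. A finite Borel `r`-sparse
partition is a proper Borel colouring of closeness with finitely many colours, as in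
Kechris–Solecki–Todorcevic. Because the degree is bounded, a Lusin–Novikov argument for Borel
relations with uniformly bounded sections (by induction on the bound, splitting off the points
whose section has maximal size) covers the neighbour relation, and so closeness, by finitely many
Borel maps `f : V → V`. A Borel injection `e : V → ℝ` separates each point from its finitely many
`f`-images at some scale `1 / m`, which gives a countable Borel proper colouring `c`; colouring
greedily in the order of `c` then needs only finitely many colours.
-/

namespace BorelSparse

open MTLLL Function

section Order

variable {α β : Type*} [LinearOrder β] {e : α → β} {s : Set α} {k : ℕ}

theorem range_eq_of_strictMono_comp (hs : s.encard ≤ k) {g : Fin k → α}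
    (hg : StrictMono (e ∘ g)) (hgs : ∀ i, g i ∈ s) : Set.range g = s := by
  refine (Set.finite_range g).eq_of_subset_of_encard_le (Set.range_subset_iff.2 hgs) ?_
  rwa [← Set.image_univ, hg.injective.of_comp.encard_image, Set.encard_univ,
    ENat.card_eq_coe_fintype_card, Fintype.card_fin]

theorem exists_strictMono_comp_of_le_encard (he : Injective e) (hs : (k : ℕ∞) ≤ s.encard) :
    ∃ g : Fin k → α, StrictMono (e ∘ g) ∧ ∀ i, g i ∈ s := by
  obtain ⟨t, hts, htk⟩ := Set.exists_subset_encard_eq hs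
  have ht : (e '' t).Finite := (Set.finite_of_encard_eq_coe htk).image e
  have hcard : ht.toFinset.card = k := by
    rw [← Nat.cast_inj (R := ℕ∞), ← Set.Finite.encard_eq_coe_toFinset_card, he.encard_image, htk]
  let u := ht.toFinset.orderEmbOfFin hcard
  have hu : ∀ i, ∃ v ∈ t, e v = u i := fun i =>
    ht.mem_toFinset.1 (ht.toFinset.orderEmbOfFin_mem hcard i)
  choose g hgt hgu using hu
  refine ⟨g, ?_, fun i => hts (hgt i)⟩
  convert u.strictMono using 1
  exact funext hgu

end Order

section Ball

variable {V : Type*} {E : V → V → Prop}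

theorem ball_symm {x y : V} {k : ℕ} (h : y ∈ ball E x k) : x ∈ ball E y k := by
  obtain ⟨p, hp⟩ := h
  exact ⟨p.reverse, by rwa [SimpleGraph.Walk.length_reverse]⟩

theorem eq_of_mem_ball_zero {x y : V} (h : y ∈ ball E x 0) : x = y := by
  obtain ⟨p, hp⟩ := h
  exact SimpleGraph.Walk.eq_of_length_eq_zero (Nat.le_zero.1 hp)

theorem comp_of_mem_ball_succ {x y : V} {k : ℕ} (h : y ∈ ball E x (k + 1)) :
    Relation.Comp (fun x z => x = z ∨ E x z ∨ E z x) (fun z y => y ∈ ball E z k) x y := by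
  obtain ⟨p, hp⟩ := h
  cases p with
  | nil => exact ⟨x, Or.inl rfl, SimpleGraph.Walk.nil, Nat.zero_le k⟩
  | cons hxz q => exact ⟨_, Or.inr hxz.2, q, by simpa using hp⟩

end Ball

section GreedyColoring

variable {V : Type*} (F : Finset (V → V)) (c : V → ℕ)

def lowerColors {α : Type*} (g : V → α) (x : V) : Set α :=
  {a | ∃ f ∈ F, c (f x) < c x ∧ g (f x) = a}

theorem exists_notMem_lowerColors (g : V → Fin (F.card + 1)) (x : V) :
    ∃ a, a ∉ lowerColors F c g x := by
  obtain ⟨a, -, ha⟩ := Finset.exists_mem_notMem_of_card_lt_card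
    (s := F.image fun f => g (f x)) (t := Finset.univ)
    (by simpa using Finset.card_image_le.trans_lt (Nat.lt_succ_self F.card))
  exact ⟨a, fun ⟨f, hf, _, hfa⟩ => ha (Finset.mem_image.2 ⟨f, hf, hfa⟩)⟩

noncomputable def greedy : ℕ → V → Fin (F.card + 1)
  | 0 => fun _ => 0
  | m + 1 => fun x =>
    if c x = m then Classical.epsilon (· ∉ lowerColors F c (greedy m) x) else greedy m x

theorem greedy_eq_of_lt {m : ℕ} {x : V} (h : c x < m) :
    greedy F c m x = greedy F c (c x + 1) x := by
  induction m with
  | zero => exact absurd h (Nat.not_lt_zero _)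
  | succ m ih =>
    rcases (Nat.lt_succ_iff.1 h).lt_or_eq with h | rfl
    · rw [← ih h]
      exact if_neg h.ne
    · rfl

end GreedyColoring

variable {V : Type*} [MeasurableSpace V]

def IsBorelCover (S : V → V → Prop) (F : Finset (V → V)) : Prop :=
  (∀ f ∈ F, Measurable f) ∧ ∀ x y, S x y → ∃ f ∈ F, f x = y

namespace IsBorelCover

variable {S T : V → V → Prop} {F G : Finset (V → V)}

theorem mono (hF : IsBorelCover S F) (hTS : ∀ x y, T x y → S x y) : IsBorelCover T F :=
  ⟨hF.1, fun x y h => hF.2 x y (hTS x y h)⟩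

theorem insert_id (hF : IsBorelCover S F) :
    IsBorelCover (fun x y => x = y ∨ S x y) (insert id F) := by
  refine ⟨Finset.forall_mem_insert _ _ _ |>.2 ⟨measurable_id, hF.1⟩, ?_⟩
  rintro x y (rfl | h)
  · exact ⟨id, Finset.mem_insert_self _ _, rfl⟩
  · obtain ⟨f, hf, rfl⟩ := hF.2 x y h
    exact ⟨f, Finset.mem_insert_of_mem hf, rfl⟩

theorem comp (hF : IsBorelCover S F) (hG : IsBorelCover T G) :
    IsBorelCover (Relation.Comp S T) (Finset.image₂ (fun f g => g ∘ f) F G) := by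
  refine ⟨fun h hh => ?_, fun x y ⟨z, hxz, hzy⟩ => ?_⟩
  · obtain ⟨f, hf, g, hg, rfl⟩ := Finset.mem_image₂.1 hh
    exact (hG.1 g hg).comp (hF.1 f hf)
  · obtain ⟨f, hf, rfl⟩ := hF.2 x z hxz
    obtain ⟨g, hg, rfl⟩ := hG.2 _ y hzy
    exact ⟨g ∘ f, Finset.mem_image₂_of_mem hf hg, rfl⟩

theorem piecewise {A : Set V} (hA : MeasurableSet A)
    (hF : IsBorelCover (fun x y => x ∈ A ∧ S x y) F)
    (hG : IsBorelCover (fun x y => x ∉ A ∧ S x y) G) :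
    IsBorelCover S (F.image (A.piecewise · id) ∪ G.image (A.piecewise id ·)) := by
  refine ⟨fun h hh => ?_, fun x y hxy => ?_⟩
  · rcases Finset.mem_union.1 hh with hh | hh <;> obtain ⟨f, hf, rfl⟩ := Finset.mem_image.1 hh
    · exact (hF.1 f hf).piecewise hA measurable_id
    · exact measurable_id.piecewise hA (hG.1 f hf)
  by_cases hx : x ∈ A
  · obtain ⟨f, hf, rfl⟩ := hF.2 x y ⟨hx, hxy⟩
    exact ⟨_, Finset.mem_union_left _ (Finset.mem_image_of_mem _ hf),
      Set.piecewise_eq_of_mem _ _ _ hx⟩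
  · obtain ⟨g, hg, rfl⟩ := hG.2 x y ⟨hx, hxy⟩
    exact ⟨_, Finset.mem_union_right _ (Finset.mem_image_of_mem _ hg),
      Set.piecewise_eq_of_notMem _ _ _ hx⟩

end IsBorelCover

section LusinNovikov

variable [StandardBorelSpace V]

/-- A point whose section has the maximal size `k` is the projection of a unique `e`-increasing
enumeration of its section, and an injective Borel image of a Borel set is Borel. -/
theorem measurableSet_and_isBorelCover_of_encard_le [Nonempty V] {S : V → V → Prop}
    (hS : MeasurableSet {p : V × V | S p.1 p.2}) {k : ℕ} (hk : ∀ x, {y | S x y}.encard ≤ k) :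
    MeasurableSet {x | (k : ℕ∞) ≤ {y | S x y}.encard} ∧
      ∃ F, IsBorelCover (fun x y => (k : ℕ∞) ≤ {y | S x y}.encard ∧ S x y) F := by
  obtain ⟨e, he⟩ := exists_measurableEmbedding_real V
  let Q : Set (V × (Fin k → V)) := {p | StrictMono (e ∘ p.2) ∧ ∀ i, S p.1 (p.2 i)}
  have hQ : MeasurableSet Q := by
    simp only [Q, StrictMono, Set.ofPred_and, Set.ofPred_forall]
    refine MeasurableSet.inter ?_ (MeasurableSet.iInter fun i =>
      hS.preimage (measurable_fst.prodMk ((measurable_pi_apply i).comp measurable_snd)))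
    exact MeasurableSet.iInter fun i => MeasurableSet.iInter fun j => MeasurableSet.iInter fun _ =>
      measurableSet_lt (he.measurable.comp ((measurable_pi_apply i).comp measurable_snd))
        (he.measurable.comp ((measurable_pi_apply j).comp measurable_snd))
  have hrange : ∀ p ∈ Q, Set.range p.2 = {y | S p.1 y} := fun p hp =>
    range_eq_of_strictMono_comp (hk p.1) hp.1 hp.2
  let π : Q → V := fun q => q.1.1
  have hπ : Injective π := by
    rintro ⟨⟨x, g⟩, hg⟩ ⟨⟨x', g'⟩, hg'⟩ (rfl : x = x')
    have hrg : Set.range (e ∘ g) = Set.range (e ∘ g') := by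
      rw [Set.range_comp, Set.range_comp, hrange _ hg, hrange _ hg']
    have := (hg.1.range_inj hg'.1).1 hrg
    simp only [Subtype.mk.injEq, Prod.mk.injEq, true_and]
    exact funext fun i => he.injective (congrFun this i)
  have := hQ.standardBorel
  have hπe : MeasurableEmbedding π :=
    (measurable_fst.comp measurable_subtype_coe).measurableEmbedding hπ
  have hA : Set.range π = {x | (k : ℕ∞) ≤ {y | S x y}.encard} := by
    ext x
    constructor
    · rintro ⟨⟨⟨x, g⟩, hg⟩, rfl⟩
      show (k : ℕ∞) ≤ {y | S x y}.encard
      rw [← hrange _ hg, ← Set.image_univ, hg.1.injective.of_comp.encard_image, Set.encard_univ,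
        ENat.card_eq_coe_fintype_card, Fintype.card_fin]
    · intro hx
      obtain ⟨g, hg, hgS⟩ := exists_strictMono_comp_of_le_encard he.injective hx
      exact ⟨⟨(x, g), hg, hgS⟩, rfl⟩
  refine ⟨hA ▸ hπe.measurableSet_range, ?_⟩
  have hext : ∀ i : Fin k, ∃ h : V → V, Measurable h ∧ h ∘ π = fun q => q.1.2 i := fun i =>
    hπe.exists_measurable_extend
      ((measurable_pi_apply i).comp (measurable_snd.comp measurable_subtype_coe)) fun _ => ‹_›
  choose H hH hHπ using hext
  refine ⟨Finset.univ.image H, by simpa using hH, ?_⟩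
  rintro x y ⟨hx, hxy⟩
  obtain ⟨⟨⟨x, g⟩, hg⟩, rfl⟩ : x ∈ Set.range π := by rwa [hA]
  obtain ⟨i, rfl⟩ : y ∈ Set.range g := (hrange _ hg).symm ▸ hxy
  exact ⟨H i, Finset.mem_image_of_mem _ (Finset.mem_univ i), congrFun (hHπ i) ⟨(x, g), hg⟩⟩

theorem exists_isBorelCover_of_encard_le [Nonempty V] (k : ℕ) {S : V → V → Prop}
    (hS : MeasurableSet {p : V × V | S p.1 p.2}) (hk : ∀ x, {y | S x y}.encard ≤ k) :
    ∃ F, IsBorelCover S F := by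
  induction k generalizing S with
  | zero =>
    refine ⟨∅, by simp, fun x y hxy => ?_⟩
    have : {y | S x y} = ∅ := Set.encard_eq_zero.1 (nonpos_iff_eq_zero.1 (hk x))
    exact absurd hxy (Set.eq_empty_iff_forall_notMem.1 this y)
  | succ k ih =>
    obtain ⟨hA, F, hF⟩ := measurableSet_and_isBorelCover_of_encard_le hS hk
    set A := {x | ((k + 1 : ℕ) : ℕ∞) ≤ {y | S x y}.encard}
    obtain ⟨G, hG⟩ := ih (S := fun x y => x ∉ A ∧ S x y) ((measurable_fst hA.compl).inter hS)
      fun x => by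
        by_cases hx : x ∈ A
        · simp [hx]
        · have hlt : {y | S x y}.encard < (k : ℕ∞) + 1 := by exact_mod_cast not_le.1 hx
          simpa [hx] using (ENat.lt_add_one_iff (ENat.natCast_ne_top k)).1 hlt
    exact ⟨_, hF.piecewise hA hG⟩

end LusinNovikov

theorem exists_isBorelCover_ball {E : V → V → Prop} {F : Finset (V → V)}
    (hF : IsBorelCover (fun x y => E x y ∨ E y x) F) (k : ℕ) :
    ∃ G, IsBorelCover (fun x y => y ∈ ball E x k) G := by
  induction k with
  | zero =>
    exact ⟨{id}, by simp [measurable_id], fun x y h => ⟨id, by simp, eq_of_mem_ball_zero h⟩⟩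
  | succ k ih =>
    obtain ⟨G, hG⟩ := ih
    exact ⟨_, (hF.insert_id.comp hG).mono fun x y => comp_of_mem_ball_succ⟩

theorem exists_isBorelCover_of_maxdeg_lt_top [StandardBorelSpace V] [Nonempty V] {E : V → V → Prop}
    (hE : MeasurableSet {p : V × V | E p.1 p.2}) (hdeg : maxdeg E < ⊤) :
    ∃ F, IsBorelCover (fun x y => E x y ∨ E y x) F := by
  obtain ⟨d, hd⟩ := ENat.ne_top_iff_exists.1 hdeg.ne
  refine exists_isBorelCover_of_encard_le d (hE.union (measurable_swap hE)) fun x => ?_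
  rw [hd]
  exact le_iSup (fun x => (Nbr E x).encard) x

/-- Points of equal colour satisfy `|e y - e x| < 1 / m x`, and `1 / m x` is at most the distance
from `e x` to every `e (f x) ≠ e x` (the terms with `f x = x` vanish, as `0⁻¹ = 0`). -/
theorem exists_measurable_nat_coloring {e : V → ℝ} (he : Measurable e) (he_inj : Injective e)
    {F : Finset (V → V)} (hF : ∀ f ∈ F, Measurable f) :
    ∃ c : V → ℕ, Measurable c ∧ ∀ f ∈ F, ∀ x, f x ≠ x → c (f x) ≠ c x := by
  let m : V → ℕ := fun x => ⌈∑ f ∈ F, |e (f x) - e x|⁻¹⌉₊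
  let c : V → ℕ × ℤ := fun x => (m x, ⌊(m x : ℝ) * e x⌋)
  have hm : Measurable m :=
    (Finset.measurable_sum _ fun f hf => ((he.comp (hF f hf)).sub he).abs.inv).nat_ceil
  refine ⟨Encodable.encode ∘ c,
    Measurable.of_discrete.comp (hm.prodMk ((Measurable.of_discrete.comp hm).mul he).floor), ?_⟩
  intro f hf x hfx hc
  obtain ⟨hmx, hfl⟩ := Prod.mk.inj (Encodable.encode_injective hc)
  rw [hmx] at hfl
  have hpos : 0 < |e (f x) - e x| := abs_pos.2 (sub_ne_zero.2 (he_inj.ne hfx))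
  have hscale : |e (f x) - e x|⁻¹ ≤ m x :=
    (Finset.single_le_sum (fun g _ => inv_nonneg.2 (abs_nonneg (e (g x) - e x))) hf).trans
      (Nat.le_ceil _)
  have hclose := Int.abs_sub_lt_one_of_floor_eq_floor hfl
  rw [← mul_sub, abs_mul, Nat.abs_cast] at hclose
  have := (inv_le_iff_one_le_mul₀ hpos).1 hscale
  linarith

section GreedyMeasurable

variable {F : Finset (V → V)} {c : V → ℕ}

theorem measurable_lowerColors {α : Type*} [MeasurableSpace α] [MeasurableSingletonClass α]
    (hF : ∀ f ∈ F, Measurable f) (hc : Measurable c) {g : V → α} (hg : Measurable g) :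
    Measurable (lowerColors F c g) := by
  refine measurable_set_iff.2 fun a => measurableSet_setOfPred.1 ?_
  have : {x | a ∈ lowerColors F c g x} = ⋃ f ∈ F, {x | c (f x) < c x} ∩ (g ∘ f) ⁻¹' {a} := by
    ext
    simp [lowerColors, and_left_comm]
  rw [this]
  exact Finset.measurableSet_biUnion _ fun f hf =>
    (measurableSet_lt (hc.comp (hF f hf)) hc).inter
      ((hg.comp (hF f hf)) (measurableSet_singleton a))

theorem measurable_greedy (hF : ∀ f ∈ F, Measurable f) (hc : Measurable c) (m : ℕ) :
    Measurable (greedy F c m) := by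
  induction m with
  | zero => exact measurable_const
  | succ m ih =>
    exact Measurable.ite (hc (measurableSet_singleton m))
      ((measurable_of_countable fun s : Set (Fin (F.card + 1)) => Classical.epsilon (· ∉ s)).comp
        (measurable_lowerColors hF hc ih)) ih

theorem exists_measurable_greedy_coloring (hF : ∀ f ∈ F, Measurable f) (hc : Measurable c) :
    ∃ p : V → Fin (F.card + 1), Measurable p ∧ ∀ f ∈ F, ∀ x, c (f x) < c x → p (f x) ≠ p x := by
  refine ⟨fun x => greedy F c (c x + 1) x, ?_, fun f hf x hlt heq => ?_⟩
  · exact (measurable_from_prod_countable_left (f := fun q : V × ℕ => greedy F c (q.2 + 1) q.1)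
      fun n => measurable_greedy hF hc (n + 1)).comp (measurable_id.prodMk hc)
  · have hx : greedy F c (c x + 1) x =
        Classical.epsilon (· ∉ lowerColors F c (greedy F c (c x)) x) := if_pos rfl
    have hy : greedy F c (c (f x) + 1) (f x) ∈ lowerColors F c (greedy F c (c x)) x :=
      ⟨f, hf, hlt, greedy_eq_of_lt F c hlt⟩
    beta_reduce at heq
    rw [heq, hx] at hy
    exact Classical.epsilon_spec (exists_notMem_lowerColors F c _ x) hy

end GreedyMeasurable

theorem exists_measurable_coloring [StandardBorelSpace V] {S : V → V → Prop}
    (hS : ∀ x y, S x y → S y x) {F : Finset (V → V)} (hF : IsBorelCover S F) :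
    ∃ n, ∃ p : V → Fin n, Measurable p ∧ ∀ x y, S x y → x ≠ y → p x ≠ p y := by
  obtain ⟨e, he⟩ := exists_measurableEmbedding_real V
  obtain ⟨c, hc, hcF⟩ := exists_measurable_nat_coloring he.measurable he.injective hF.1
  obtain ⟨p, hp, hpF⟩ := exists_measurable_greedy_coloring hF.1 hc
  refine ⟨_, p, hp, fun x y hxy hne => ?_⟩
  obtain ⟨f, hf, rfl⟩ := hF.2 x y hxy
  rcases (hcF f hf x (Ne.symm hne)).lt_or_gt with hlt | hgt
  · exact (hpF f hf x hlt).symm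
  · obtain ⟨g, hg, hgx⟩ := hF.2 (f x) x (hS _ _ hxy)
    have := hpF g hg (f x) (by rwa [hgx])
    rwa [hgx] at this

end BorelSparse

open BorelSparse

open MTLLL in
/-- Lemma 4.1: a Borel digraph of finite maximal degree admits, for every `r`, a finite
Borel `r`-sparse partition. -/
theorem exists_borel_sparse_partition
    {V : Type*} [Nonempty V] [MeasurableSpace V] [StandardBorelSpace V]
    (E : V → V → Prop) (hE : MeasurableSet {p : V × V | E p.1 p.2})
    (hdeg : maxdeg E < ⊤) (r : ℕ) :
    ∃ (n : ℕ) (part : V → Fin n), Measurable part ∧ Sparse E part r := by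
  obtain ⟨F, hF⟩ := exists_isBorelCover_of_maxdeg_lt_top hE hdeg
  obtain ⟨G, hG⟩ := exists_isBorelCover_ball hF (2 * r)
  obtain ⟨n, part, hpart, hproper⟩ := exists_measurable_coloring (fun _ _ => ball_symm) hG
  exact ⟨n, part, hpart, fun x y hxy hne hball => hproper x y hball hne hxy⟩
end

section
/- Let G be a Borel digraph with maxdeg(G) < ∞. Then for every Borel set A ⊆ V(G) there exists a set B ⊆ A that is a maximal independent (in G) subset of A and is a Borel subset of V(G). -/
open MeasureTheory
open scoped Classical ENNReal

/-!
Each vertex has finitely many neighbours, so for a Polish topology compatible with the Borel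
structure it lies in a basic open set `U` containing none of them; the Borel sets `U \ N(U)`, for
`U` in a countable basis, are therefore independent and cover `V`. Running the greedy algorithm
through them (at stage `k`, add the vertices of `A` in the `k`-th set with no neighbour chosen so
far) produces a maximal independent subset of `A`. Every stage is Borel because the neighbourhood
`N(W)` of a Borel set is the projection of a Borel subset of `V × V` whose sections have at most
`maxdeg` points. Such projections are Borel by induction on the bound: the points whose section
has the maximal size are the injective image (Lusin–Souslin) of the Borel set of increasing
enumerations of their sections, and removing them lowers the bound.
-/

open Set

section LinearOrder

variable {α : Type*} [LinearOrder α]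

lemma exists_strictMono_fin_of_le_encard {s : Set α} {k : ℕ} (h : (k : ℕ∞) ≤ s.encard) :
    ∃ f : Fin k → α, StrictMono f ∧ range f ⊆ s := by
  obtain ⟨t, hts, htk⟩ := exists_subset_encard_eq h
  have ht : t.Finite := finite_of_encard_eq_coe htk
  have hcard : ht.toFinset.card = k := by
    rw [← ENat.natCast_inj, ← ht.encard_eq_coe_toFinset_card, htk]
  refine ⟨ht.toFinset.orderEmbOfFin hcard, (ht.toFinset.orderEmbOfFin hcard).strictMono, ?_⟩
  rwa [Finset.range_orderEmbOfFin, ht.coe_toFinset]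

lemma StrictMono.eq_of_range_subset {s : Set α} {k : ℕ} (hs : s.encard ≤ k)
    {f g : Fin k → α} (hf : StrictMono f) (hg : StrictMono g) (hfs : range f ⊆ s)
    (hgs : range g ⊆ s) : f = g := by
  have range_eq {f : Fin k → α} (hf : StrictMono f) (hfs : range f ⊆ s) : range f = s :=
    (finite_range f).eq_of_subset_of_encard_le hfs
      (hs.trans (by simpa using hf.injective.encard_range))
  exact (hf.range_inj hg).1 ((range_eq hf hfs).trans (range_eq hg hgs).symm)

end LinearOrder

section FiniteSections

variable {X : Type*} [MeasurableSpace X] [StandardBorelSpace X]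

lemma measurableSet_setOf_le_encard_preimage_mk {S : Set (X × ℝ)} (hS : MeasurableSet S)
    {k : ℕ} (hsec : ∀ x, (Prod.mk x ⁻¹' S).encard ≤ k) :
    MeasurableSet {x | (k : ℕ∞) ≤ (Prod.mk x ⁻¹' S).encard} := by
  set T : Set (X × (Fin k → ℝ)) := {p | StrictMono p.2 ∧ ∀ i, (p.1, p.2 i) ∈ S}
  have hT : MeasurableSet T := measurableSet_setOfPred.2 (by unfold StrictMono; fun_prop)
  have hinj : InjOn Prod.fst T := by
    rintro ⟨x, f⟩ ⟨hf, hfS⟩ ⟨x', g⟩ ⟨hg, hgS⟩ (rfl : x = x')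
    exact congrArg (Prod.mk x)
      (hf.eq_of_range_subset (hsec x) hg (range_subset_iff.2 hfS) (range_subset_iff.2 hgS))
  convert hT.image_of_measurable_injOn measurable_fst hinj using 1
  ext x
  constructor
  · intro hx
    obtain ⟨f, hf, hfS⟩ := exists_strictMono_fin_of_le_encard hx
    exact ⟨(x, f), ⟨hf, fun i => hfS (mem_range_self i)⟩, rfl⟩
  · rintro ⟨⟨x, f⟩, ⟨hf, hfS⟩, rfl⟩
    calc (k : ℕ∞) ≤ (range f).encard := by simpa using hf.injective.encard_range
      _ ≤ _ := encard_mono (range_subset_iff.2 hfS)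

lemma image_fst_eq_union_image_fst_inter_compl_prod {β γ : Type*} {S : Set (β × γ)}
    {F : Set β} (hF : F ⊆ Prod.fst '' S) :
    Prod.fst '' S = F ∪ Prod.fst '' (S ∩ Fᶜ ×ˢ univ) := by
  refine Subset.antisymm ?_ (union_subset hF (image_mono inter_subset_left))
  rintro _ ⟨⟨x, y⟩, hxy, rfl⟩
  by_cases hx : x ∈ F
  · exact .inl hx
  · exact .inr ⟨(x, y), ⟨hxy, hx, trivial⟩, rfl⟩

lemma measurableSet_image_fst_of_encard_preimage_mk_le_real {n : ℕ} {S : Set (X × ℝ)}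
    (hS : MeasurableSet S) (hsec : ∀ x, (Prod.mk x ⁻¹' S).encard ≤ n) :
    MeasurableSet (Prod.fst '' S) := by
  induction n generalizing S with
  | zero =>
    have : S = ∅ := eq_empty_of_forall_notMem fun ⟨x, y⟩ hxy => by
      simpa using (encard_eq_zero.1 (nonpos_iff_eq_zero.1 (hsec x))).subset hxy
    simp [this]
  | succ n ih =>
    set F := {x | ((n + 1 : ℕ) : ℕ∞) ≤ (Prod.mk x ⁻¹' S).encard}
    have hF : MeasurableSet F := measurableSet_setOf_le_encard_preimage_mk hS hsec
    have hFS : F ⊆ Prod.fst '' S := fun x hx => by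
      obtain ⟨y, hy⟩ := one_le_encard_iff_nonempty.1 (le_trans (by simp) hx)
      exact ⟨(x, y), hy, rfl⟩
    have hsec' (x : X) : (Prod.mk x ⁻¹' (S ∩ Fᶜ ×ˢ univ)).encard ≤ n := by
      by_cases hx : x ∈ F
      · simp [hx]
      · calc (Prod.mk x ⁻¹' (S ∩ Fᶜ ×ˢ univ)).encard ≤ (Prod.mk x ⁻¹' S).encard :=
              encard_mono (preimage_mono inter_subset_left)
          _ ≤ n := by simpa [F, ENat.lt_add_one_iff] using hx
    rw [image_fst_eq_union_image_fst_inter_compl_prod hFS]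
    exact hF.union (ih (hS.inter (hF.compl.prod .univ)) hsec')

theorem measurableSet_image_fst_of_encard_preimage_mk_le {Y : Type*} [MeasurableSpace Y]
    [StandardBorelSpace Y] {n : ℕ} {S : Set (X × Y)} (hS : MeasurableSet S)
    (hsec : ∀ x, (Prod.mk x ⁻¹' S).encard ≤ n) : MeasurableSet (Prod.fst '' S) := by
  obtain ⟨e, he⟩ := exists_measurableEmbedding_real Y
  have he' : MeasurableEmbedding (Prod.map id e : X × Y → X × ℝ) :=
    MeasurableEmbedding.id.prodMap he
  have hsec' (x : X) : Prod.mk x ⁻¹' (Prod.map id e '' S) = e '' (Prod.mk x ⁻¹' S) := by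
    ext; simp
  rw [show Prod.fst '' S = Prod.fst '' (Prod.map id e '' S) by rw [image_image]; rfl]
  refine measurableSet_image_fst_of_encard_preimage_mk_le_real (n := n)
    (he'.measurableSet_image.2 hS) fun x => ?_
  rw [hsec', he.injective.encard_image]
  exact hsec x

end FiniteSections

lemma exists_seq_measurableSet_separating_finite {V : Type*} [MeasurableSpace V]
    [StandardBorelSpace V] :
    ∃ U : ℕ → Set V, (∀ n, MeasurableSet (U n)) ∧
      ∀ x (N : Set V), N.Finite → x ∉ N → ∃ n, x ∈ U n ∧ Disjoint (U n) N := by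
  let := upgradeStandardBorel V
  obtain ⟨U, hU⟩ := TopologicalSpace.exists_seq_basis V
  refine ⟨U, fun n => (hU.isOpen (mem_range_self n)).measurableSet, fun x N hN hx => ?_⟩
  obtain ⟨_, ⟨n, rfl⟩, hxU, hUN⟩ := hU.exists_subset_of_mem_open hx hN.isClosed.isOpen_compl
  exact ⟨n, hxU, subset_compl_iff_disjoint_right.1 hUN⟩

namespace SimpleGraph

variable {V : Type*} (G : SimpleGraph V)

def nbhd (W : Set V) : Set V := {x | ∃ y ∈ W, G.Adj x y}

def greedyIndep (A : Set V) (P : ℕ → Set V) : ℕ → Set V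
  | 0 => ∅
  | k + 1 => greedyIndep A P k ∪ ((A ∩ P k) \ G.nbhd (greedyIndep A P k))

variable {G} {A : Set V} {P : ℕ → Set V}

lemma greedyIndep_subset (k : ℕ) : G.greedyIndep A P k ⊆ A := by
  induction k with
  | zero => exact empty_subset A
  | succ k ih => exact union_subset ih fun x hx => hx.1.1

lemma greedyIndep_mono : Monotone (G.greedyIndep A P) :=
  monotone_nat_of_le_succ fun _ => subset_union_left

lemma exists_mem_greedyIndep_step {x : V} {m : ℕ} (hx : x ∈ G.greedyIndep A P m) :
    ∃ k, x ∈ (A ∩ P k) \ G.nbhd (G.greedyIndep A P k) := by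
  induction m with
  | zero => exact absurd hx (notMem_empty x)
  | succ m ih => exact hx.elim ih fun h => ⟨m, h⟩

lemma isIndepSet_iUnion_greedyIndep (hP : ∀ k, G.IsIndepSet (P k)) :
    G.IsIndepSet (⋃ k, G.greedyIndep A P k) := by
  intro x hx y hy hxy hadj
  obtain ⟨k, hxk⟩ := exists_mem_greedyIndep_step (mem_iUnion.1 hx).choose_spec
  obtain ⟨m, hym⟩ := exists_mem_greedyIndep_step (mem_iUnion.1 hy).choose_spec
  rcases lt_trichotomy k m with hkm | rfl | hmk
  · exact hym.2 ⟨x, greedyIndep_mono hkm (.inr hxk), hadj.symm⟩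
  · exact hP k hxk.1.2 hym.1.2 hxy hadj
  · exact hxk.2 ⟨y, greedyIndep_mono hmk (.inr hym), hadj⟩

lemma maximal_iUnion_greedyIndep (hP : ∀ k, G.IsIndepSet (P k)) (hA : A ⊆ ⋃ k, P k) :
    Maximal (fun J => J ⊆ A ∧ G.IsIndepSet J) (⋃ k, G.greedyIndep A P k) := by
  refine ⟨⟨iUnion_subset greedyIndep_subset, isIndepSet_iUnion_greedyIndep hP⟩,
    fun J ⟨hJA, hJ⟩ hBJ x hxJ => ?_⟩
  by_contra hxB
  obtain ⟨k, hxk⟩ := mem_iUnion.1 (hA (hJA hxJ))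
  have hx_nbhd : x ∈ G.nbhd (G.greedyIndep A P k) := by
    by_contra hx
    exact hxB (mem_iUnion.2 ⟨k + 1, .inr ⟨⟨hJA hxJ, hxk⟩, hx⟩⟩)
  obtain ⟨y, hy, hxy⟩ := hx_nbhd
  exact hJ hxJ (hBJ (mem_iUnion.2 ⟨k, hy⟩)) hxy.ne hxy

section Measurable

variable [MeasurableSpace V] [StandardBorelSpace V] {d : ℕ}

lemma measurableSet_nbhd (hG : MeasurableSet {p : V × V | G.Adj p.1 p.2})
    (hd : ∀ x, (G.neighborSet x).encard ≤ d) {W : Set V} (hW : MeasurableSet W) :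
    MeasurableSet (G.nbhd W) := by
  have : G.nbhd W = Prod.fst '' ({p : V × V | G.Adj p.1 p.2} ∩ univ ×ˢ W) := by
    ext x
    simp [nbhd, and_comm]
  rw [this]
  exact measurableSet_image_fst_of_encard_preimage_mk_le (hG.inter (MeasurableSet.univ.prod hW))
    fun x => (encard_mono fun y hy => hy.1).trans (hd x)

lemma measurableSet_greedyIndep (hG : MeasurableSet {p : V × V | G.Adj p.1 p.2})
    (hd : ∀ x, (G.neighborSet x).encard ≤ d) (hA : MeasurableSet A)
    (hP : ∀ k, MeasurableSet (P k)) (k : ℕ) :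
    MeasurableSet (G.greedyIndep A P k) := by
  induction k with
  | zero => exact .empty
  | succ k ih => exact ih.union ((hA.inter (hP k)).diff (measurableSet_nbhd hG hd ih))

lemma exists_measurableSet_isIndepSet_cover (hG : MeasurableSet {p : V × V | G.Adj p.1 p.2})
    (hd : ∀ x, (G.neighborSet x).encard ≤ d) :
    ∃ P : ℕ → Set V,
      (∀ n, MeasurableSet (P n)) ∧ (∀ n, G.IsIndepSet (P n)) ∧ ⋃ n, P n = univ := by
  obtain ⟨U, hU, hsep⟩ := exists_seq_measurableSet_separating_finite (V := V)
  refine ⟨fun n => U n \ G.nbhd (U n), fun n => (hU n).diff (measurableSet_nbhd hG hd (hU n)),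
    fun n x hx y hy _ hxy => hx.2 ⟨y, hy.1, hxy⟩, eq_univ_of_forall fun x => ?_⟩
  obtain ⟨n, hxU, hUN⟩ :=
    hsep x _ (finite_of_encard_le_coe (hd x)) (G.notMem_neighborSet_self (a := x))
  exact mem_iUnion.2 ⟨n, hxU, fun ⟨y, hy, hxy⟩ => hUN.notMem_of_mem_left hy hxy⟩

theorem exists_measurableSet_maximal_isIndepSet (hG : MeasurableSet {p : V × V | G.Adj p.1 p.2})
    (hd : ∀ x, (G.neighborSet x).encard ≤ d) (hA : MeasurableSet A) :
    ∃ B, MeasurableSet B ∧ Maximal (fun J => J ⊆ A ∧ G.IsIndepSet J) B := by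
  obtain ⟨P, hPm, hP, hcover⟩ := exists_measurableSet_isIndepSet_cover hG hd
  exact ⟨_, .iUnion (measurableSet_greedyIndep hG hd hA hPm),
    maximal_iUnion_greedyIndep hP (hcover ▸ subset_univ A)⟩

end Measurable

end SimpleGraph

namespace MTLLL

variable {V : Type*} {E : V → V → Prop}

lemma indep_iff_isIndepSet_toSG {I : Set V} : Indep E I ↔ (toSG E).IsIndepSet I := by
  constructor
  · exact fun h x hx y hy hxy ⟨_, hE⟩ => hE.elim (h x hx y hy hxy) (h y hy x hx hxy.symm)
  · exact fun h x hx y hy hxy hE => h hx hy hxy ⟨hxy, .inl hE⟩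

lemma maxIndepIn_of_maximal {A B : Set V}
    (h : Maximal (fun J => J ⊆ A ∧ (toSG E).IsIndepSet J) B) : MaxIndepIn E A B :=
  ⟨h.1.1, indep_iff_isIndepSet_toSG.2 h.1.2,
    fun _ hBJ hJA hJ => (h.2 ⟨hJA, indep_iff_isIndepSet_toSG.1 hJ⟩ hBJ).antisymm hBJ⟩

lemma measurableSet_adj_toSG [MeasurableSpace V] [MeasurableEq V]
    (hE : MeasurableSet {p : V × V | E p.1 p.2}) :
    MeasurableSet {p : V × V | (toSG E).Adj p.1 p.2} :=
  measurableSet_diagonal.compl.inter (hE.union (measurable_swap hE))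

lemma encard_neighborSet_toSG_le_maxdeg (x : V) : ((toSG E).neighborSet x).encard ≤ maxdeg E :=
  (encard_mono fun _ hy => hy.2).trans (le_iSup (fun x => (Nbr E x).encard) x)

end MTLLL

open MTLLL in
theorem exists_borel_maximal_independent_general
    {V : Type*} [MeasurableSpace V] [StandardBorelSpace V]
    (E : V → V → Prop) (hE : MeasurableSet {p : V × V | E p.1 p.2})
    (hdeg : maxdeg E < ⊤) (A : Set V) (hA : MeasurableSet A) :
    ∃ B : Set V, MeasurableSet B ∧ MaxIndepIn E A B := by
  obtain ⟨d, hd⟩ := WithTop.ne_top_iff_exists.1 hdeg.ne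
  obtain ⟨B, hB, hmax⟩ := (toSG E).exists_measurableSet_maximal_isIndepSet
    (measurableSet_adj_toSG hE) (fun x => (encard_neighborSet_toSG_le_maxdeg x).trans hd.ge) hA
  exact ⟨B, hB, maxIndepIn_of_maximal hmax⟩

open MTLLL in
/-- Lemma 4.4(a): in a Borel digraph of finite maximal degree, every Borel set contains a
maximal independent subset which is Borel. -/
theorem exists_borel_maximal_independent
    {V : Type*} [Nonempty V] [MeasurableSpace V] [StandardBorelSpace V]
    (E : V → V → Prop) (hE : MeasurableSet {p : V × V | E p.1 p.2})
    (hdeg : maxdeg E < ⊤) (A : Set V) (hA : MeasurableSet A) :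
    ∃ B : Set V, MeasurableSet B ∧ MaxIndepIn E A B :=
  exists_borel_maximal_independent_general E hE hdeg A hA
end
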